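/- Fix j ∈ {1, …, J} and δ ∈ (0, 1). There exists a constant K_δ < ∞, depending only on δ, d, J and 𝒳, such that for every a ≥ 1 there exist Borel probability measures G_1, …, G_m on ℝ^d with log m ≤ K_δ a^d and with the property that every Borel probability measure G on ℝ^d with G({β : |β| ≤ a}) ≥ 1 − δ satisfies min_{1 ≤ i ≤ m} ∫_𝒳 |q_j(x; G) − q_j(x; G_i)| M(dx) < 3δ. -/

import Mathlib

/-!
Fix `R` bounding the covariates on `𝒳`. Moving `β` by `r` changes the logit kernel by a factor at
most `exp (2 R r)`, so rounding `G` to a grid of mesh `η ≈ δ / (R √d)` on the cube `[-a, a]ᵈ` moves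
the choice probabilities by at most `δ / 2` on the ball and by the outside mass `δ` elsewhere.
The rounded measure is then replaced by the empirical measure of `T ≈ δ⁻²` grid points (Maurey's
empirical method): `T` independent draws have mean squared `L²(M)` error at most `1 / (4 T)`, so
some draw has `L¹(M)` error at most `δ / 2`. There are `(2n + 1) ^ (d T)` such draws, with
`n ≈ a / η`, and `d T log (2n + 1) = O(a) = O(aᵈ)` with constants independent of `a`.
-/

open MeasureTheory ProbabilityTheory Filter Real

noncomputable section

/-- The multinomial logit kernel `k_j(x, β)`. -/
def mlogit {d J : ℕ} (j : Fin J) (x : Fin J → EuclideanSpace ℝ (Fin d))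
    (β : EuclideanSpace ℝ (Fin d)) : ℝ :=
  Real.exp (inner ℝ (x j) β : ℝ) / ∑ l : Fin J, Real.exp (inner ℝ (x l) β : ℝ)

/-- Choice probability `q_j(x; G)`. -/
def choiceProb {d J : ℕ} (j : Fin J) (x : Fin J → EuclideanSpace ℝ (Fin d))
    (G : Measure (EuclideanSpace ℝ (Fin d))) : ℝ :=
  ∫ β, mlogit j x β ∂G

open scoped ENNReal Topology

variable {d J : ℕ}

section Logit

lemma sum_exp_inner_pos (j : Fin J) (x : Fin J → EuclideanSpace ℝ (Fin d))
    (β : EuclideanSpace ℝ (Fin d)) : 0 < ∑ l, exp (inner ℝ (x l) β) :=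
  Finset.sum_pos (fun _ _ ↦ exp_pos _) ⟨j, Finset.mem_univ _⟩

variable (j : Fin J) (x : Fin J → EuclideanSpace ℝ (Fin d))

lemma mlogit_nonneg (β : EuclideanSpace ℝ (Fin d)) : 0 ≤ mlogit j x β := by
  unfold mlogit; positivity

lemma mlogit_le_one (β : EuclideanSpace ℝ (Fin d)) : mlogit j x β ≤ 1 :=
  div_le_one_of_le₀
    (Finset.single_le_sum (f := fun l ↦ exp (inner ℝ (x l) β)) (fun _ _ ↦ (exp_pos _).le)
      (Finset.mem_univ j))
    (sum_exp_inner_pos j x β).le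

omit x in
lemma continuous_mlogit :
    Continuous fun p : (Fin J → EuclideanSpace ℝ (Fin d)) × EuclideanSpace ℝ (Fin d) ↦
      mlogit j p.1 p.2 :=
  Continuous.div (by fun_prop) (by fun_prop) fun p ↦ (sum_exp_inner_pos j p.1 p.2).ne'

lemma continuous_mlogit_right : Continuous (mlogit j x) :=
  (continuous_mlogit j).comp (Continuous.prodMk_right x)

/-- Each exponent `⟪x l, β⟫` moves by at most `t`, so the numerator and the denominator of the
logit change by factors in `[exp (-t), exp t]`. -/
lemma mlogit_le_exp_mul_mlogit {R t : ℝ} (hx : ∀ l, ‖x l‖ ≤ R)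
    {β β' : EuclideanSpace ℝ (Fin d)} (ht : R * ‖β - β'‖ ≤ t) :
    mlogit j x β ≤ exp (2 * t) * mlogit j x β' := by
  have hinner : ∀ l, |inner ℝ (x l) β - inner ℝ (x l) β'| ≤ t := fun l ↦ by
    rw [← inner_sub_right]
    exact (abs_real_inner_le_norm _ _).trans
      ((mul_le_mul_of_nonneg_right (hx l) (norm_nonneg _)).trans ht)
  have hnum : exp (inner ℝ (x j) β) ≤ exp t * exp (inner ℝ (x j) β') := by
    rw [← exp_add]; exact exp_le_exp.2 (by linarith [(abs_le.1 (hinner j)).2])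
  have hden : exp (-t) * ∑ l, exp (inner ℝ (x l) β') ≤ ∑ l, exp (inner ℝ (x l) β) := by
    rw [Finset.mul_sum]
    refine Finset.sum_le_sum fun l _ ↦ ?_
    rw [← exp_add]; exact exp_le_exp.2 (by linarith [(abs_le.1 (hinner l)).1])
  calc mlogit j x β
      ≤ exp t * exp (inner ℝ (x j) β') / (exp (-t) * ∑ l, exp (inner ℝ (x l) β')) :=
        div_le_div₀ (by positivity) hnum (by have := sum_exp_inner_pos j x β'; positivity) hden
    _ = exp (2 * t) * mlogit j x β' := by
        rw [mlogit, exp_neg, two_mul, exp_add]; field_simp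

lemma abs_mlogit_sub_le {R t : ℝ} (hx : ∀ l, ‖x l‖ ≤ R)
    {β β' : EuclideanSpace ℝ (Fin d)} (ht : R * ‖β - β'‖ ≤ t) :
    |mlogit j x β - mlogit j x β'| ≤ exp (2 * t) - 1 := by
  have h₁ := mlogit_le_exp_mul_mlogit j x hx ht
  have h₂ := mlogit_le_exp_mul_mlogit j x (t := t) hx (β := β') (β' := β)
    (by rwa [norm_sub_rev] at ht)
  have ht₀ : 0 ≤ t := (mul_nonneg ((norm_nonneg _).trans (hx j)) (norm_nonneg _)).trans ht
  have := one_le_exp (by linarith : 0 ≤ 2 * t)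
  have := mlogit_le_one j x β
  have := mlogit_le_one j x β'
  rw [abs_sub_le_iff]
  constructor <;> nlinarith

end Logit

section ChoiceProb

variable (j : Fin J) (x : Fin J → EuclideanSpace ℝ (Fin d))

lemma integrable_mlogit (G : Measure (EuclideanSpace ℝ (Fin d))) [IsFiniteMeasure G] :
    Integrable (mlogit j x) G :=
  .of_bound (continuous_mlogit_right j x).aestronglyMeasurable 1 <| ae_of_all _ fun β ↦ by
    rw [norm_of_nonneg (mlogit_nonneg j x β)]; exact mlogit_le_one j x β

lemma choiceProb_nonneg (G : Measure (EuclideanSpace ℝ (Fin d))) : 0 ≤ choiceProb j x G :=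
  integral_nonneg (mlogit_nonneg j x)

lemma choiceProb_le_one (G : Measure (EuclideanSpace ℝ (Fin d))) [IsProbabilityMeasure G] :
    choiceProb j x G ≤ 1 := by
  rw [choiceProb]
  simpa using integral_mono (integrable_mlogit j x G) (integrable_const 1) (mlogit_le_one j x)

lemma abs_choiceProb_sub_le_one (G G' : Measure (EuclideanSpace ℝ (Fin d)))
    [IsProbabilityMeasure G] [IsProbabilityMeasure G'] :
    |choiceProb j x G - choiceProb j x G'| ≤ 1 :=
  abs_sub_le_of_nonneg_of_le (choiceProb_nonneg j x G) (choiceProb_le_one j x G)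
    (choiceProb_nonneg j x G') (choiceProb_le_one j x G')

omit x in
lemma integrable_choiceProb (M : Measure (Fin J → EuclideanSpace ℝ (Fin d))) [IsFiniteMeasure M]
    (G : Measure (EuclideanSpace ℝ (Fin d))) [IsProbabilityMeasure G] :
    Integrable (fun x ↦ choiceProb j x G) M := by
  have hm : Measurable fun x ↦ choiceProb j x G :=
    (continuous_mlogit j).stronglyMeasurable.integral_prod_right'.measurable
  exact .of_bound hm.aestronglyMeasurable 1 <| ae_of_all _ fun x ↦ by
    rw [norm_of_nonneg (choiceProb_nonneg j x G)]; exact choiceProb_le_one j x G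

lemma choiceProb_map {α : Type*} [MeasurableSpace α] {φ : α → EuclideanSpace ℝ (Fin d)}
    (hφ : Measurable φ) (G : Measure α) :
    choiceProb j x (G.map φ) = ∫ a, mlogit j x (φ a) ∂G :=
  integral_map hφ.aemeasurable (continuous_mlogit_right j x).aestronglyMeasurable

lemma abs_choiceProb_sub_choiceProb_map_le {R t : ℝ} (hx : ∀ l, ‖x l‖ ≤ R) (ht : 0 ≤ t)
    {φ : EuclideanSpace ℝ (Fin d) → EuclideanSpace ℝ (Fin d)} (hφ : Measurable φ)
    {B : Set (EuclideanSpace ℝ (Fin d))} (hB : MeasurableSet B)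
    (hφB : ∀ β ∈ B, R * ‖β - φ β‖ ≤ t)
    (G : Measure (EuclideanSpace ℝ (Fin d))) [IsProbabilityMeasure G] :
    |choiceProb j x G - choiceProb j x (G.map φ)| ≤ exp (2 * t) - 1 + G.real Bᶜ := by
  have hint : Integrable (fun β ↦ mlogit j x (φ β)) G :=
    (integrable_map_measure (continuous_mlogit_right j x).aestronglyMeasurable
      hφ.aemeasurable).1 (integrable_mlogit j x _)
  have hpt : ∀ β, |mlogit j x β - mlogit j x (φ β)| ≤ (exp (2 * t) - 1) + Bᶜ.indicator 1 β := by
    intro β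
    by_cases hβ : β ∈ B
    · simpa [hβ] using abs_mlogit_sub_le j x hx (hφB β hβ)
    · have := one_le_exp (by positivity : 0 ≤ 2 * t)
      have := abs_sub_le_of_nonneg_of_le (mlogit_nonneg j x β) (mlogit_le_one j x β)
        (mlogit_nonneg j x (φ β)) (mlogit_le_one j x (φ β))
      simp only [Set.indicator_of_mem (Set.mem_compl hβ), Pi.one_apply]
      linarith
  calc |choiceProb j x G - choiceProb j x (G.map φ)|
      = |∫ β, (mlogit j x β - mlogit j x (φ β)) ∂G| := by
        rw [choiceProb_map j x hφ, choiceProb, integral_sub (integrable_mlogit j x G) hint]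
    _ ≤ ∫ β, |mlogit j x β - mlogit j x (φ β)| ∂G := abs_integral_le_integral_abs
    _ ≤ ∫ β, ((exp (2 * t) - 1) + Bᶜ.indicator 1 β) ∂G :=
        integral_mono ((integrable_mlogit j x G).sub hint).abs
          ((integrable_const _).add ((integrable_const 1).indicator hB.compl)) hpt
    _ = exp (2 * t) - 1 + G.real Bᶜ := by
        rw [integral_add (integrable_const _) ((integrable_const 1).indicator hB.compl),
          integral_indicator_one hB.compl]
        simp

end ChoiceProb

lemma EuclideanSpace.norm_le_sqrt_card_mul {ι : Type*} [Fintype ι] {x : EuclideanSpace ℝ ι}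
    {r : ℝ} (hr : 0 ≤ r) (hx : ∀ i, |x i| ≤ r) : ‖x‖ ≤ √(Fintype.card ι) * r := by
  rw [EuclideanSpace.norm_eq, ← sqrt_sq hr, ← sqrt_mul (Nat.cast_nonneg _)]
  gcongr
  calc ∑ i, ‖x i‖ ^ 2 ≤ ∑ _i : ι, r ^ 2 :=
        Finset.sum_le_sum fun i _ ↦ by rw [norm_eq_abs]; gcongr; exact hx i
    _ = Fintype.card ι * r ^ 2 := by simp

section Grid

abbrev Grid (d n : ℕ) : Type := Fin d → Set.Icc (-(n : ℤ)) n

variable {n : ℕ}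

lemma card_grid : Fintype.card (Grid d n) = (2 * n + 1) ^ d := by
  rw [Fintype.card_fun, Fintype.card_fin]
  congr 1
  have := Int.card_fintype_Icc_of_le (a := -(n : ℤ)) (b := n) (by omega)
  omega

lemma log_card_samples_le (T : ℕ) :
    log (Fintype.card (Fin T → Grid d n)) ≤ d * T * (2 * n) := by
  rw [Fintype.card_fun, card_grid, Fintype.card_fin, ← pow_mul, Nat.cast_pow, log_pow]
  push_cast
  have := log_le_sub_one_of_pos (by positivity : (0 : ℝ) < 2 * n + 1)
  have : (0 : ℝ) ≤ d * T := by positivity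
  nlinarith

def gridPoint (η : ℝ) (f : Grid d n) : EuclideanSpace ℝ (Fin d) :=
  WithLp.toLp 2 fun i ↦ η * (f i : ℤ)

def roundToGrid (n : ℕ) (η : ℝ) (β : EuclideanSpace ℝ (Fin d)) : Grid d n :=
  fun i ↦ Set.projIcc (-(n : ℤ)) n (by omega) (round (β i / η))

lemma measurable_roundToGrid (η : ℝ) : Measurable (roundToGrid (d := d) n η) := by
  refine measurable_pi_lambda _ fun i ↦ (measurable_of_countable _).comp ?_
  simp_rw [round_eq]
  exact ((((EuclideanSpace.proj i).continuous.measurable).div_const η).add_const _).floor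

lemma norm_gridPoint_roundToGrid_sub_le {η : ℝ} (hη : 0 < η) {β : EuclideanSpace ℝ (Fin d)}
    (hβ : ‖β‖ ≤ n * η) : ‖gridPoint η (roundToGrid n η β) - β‖ ≤ √d * (η / 2) := by
  refine (EuclideanSpace.norm_le_sqrt_card_mul (r := η / 2) (by positivity) fun i ↦ ?_).trans_eq
    (by rw [Fintype.card_fin])
  set y := β i / η
  have hy : |y| ≤ n := by
    rw [abs_div, abs_of_pos hη, div_le_iff₀ hη]
    exact (PiLp.norm_apply_le β i).trans hβ
  have hround := abs_le.1 (abs_sub_round y)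
  have hlo : -(n : ℤ) ≤ round y := by
    have : ((-(n : ℤ) - 1 : ℤ) : ℝ) < round y := by push_cast; linarith [(abs_le.1 hy).1]
    have := Int.cast_lt.1 this
    omega
  have hhi : round y ≤ n := by
    have : (round y : ℝ) < ((n + 1 : ℤ) : ℝ) := by push_cast; linarith [(abs_le.1 hy).2]
    have := Int.cast_lt.1 this
    omega
  show |η * (Set.projIcc _ _ _ (round y) : ℤ) - β i| ≤ η / 2
  rw [Set.projIcc_of_mem _ ⟨hlo, hhi⟩, show β i = η * y from (mul_div_cancel₀ _ hη.ne').symm,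
    ← mul_sub, abs_mul, abs_of_pos hη, abs_sub_comm]
  linarith [mul_le_mul_of_nonneg_left (abs_sub_round y) hη.le]

end Grid

section Sampling

variable {α : Type*}

def empiricalMean {T : ℕ} (h : α → ℝ) (w : Fin T → α) : ℝ := (T : ℝ)⁻¹ * ∑ s, h (w s)

lemma empiricalMean_mem_Icc {T : ℕ} {h : α → ℝ} (hb : ∀ a, h a ∈ Set.Icc (0 : ℝ) 1)
    (w : Fin T → α) : empiricalMean h w ∈ Set.Icc (0 : ℝ) 1 := by
  refine ⟨mul_nonneg (by positivity) (Finset.sum_nonneg fun s _ ↦ (hb _).1), ?_⟩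
  calc empiricalMean h w ≤ (T : ℝ)⁻¹ * ∑ _s : Fin T, (1 : ℝ) :=
        mul_le_mul_of_nonneg_left (Finset.sum_le_sum fun s _ ↦ (hb _).2) (by positivity)
    _ ≤ 1 := by simpa using inv_mul_le_one_of_le₀ le_rfl (Nat.cast_nonneg T)

variable [MeasurableSpace α] (ν : Measure α) [IsProbabilityMeasure ν]

/-- The variance of a mean of `T` independent samples is `Var[h; ν] / T`, and
`Var[h; ν] ≤ 1 / 4` by Popoviciu's inequality. -/
lemma integral_sq_empiricalMean_sub_le {h : α → ℝ} (hm : Measurable h)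
    (hb : ∀ a, h a ∈ Set.Icc (0 : ℝ) 1) {T : ℕ} (hT : 0 < T) :
    ∫ w, (empiricalMean h w - ∫ a, h a ∂ν) ^ 2 ∂(Measure.pi fun _ : Fin T ↦ ν) ≤
      (4 * T : ℝ)⁻¹ := by
  set P := Measure.pi fun _ : Fin T ↦ ν
  set S : (Fin T → α) → ℝ := ∑ s : Fin T, fun w ↦ h (w s) with hSdef
  have hS : ∀ w, S w = ∑ s, h (w s) := fun w ↦ Finset.sum_apply _ _ _
  have hmL2 : MemLp h 2 ν := memLp_of_bounded (ae_of_all _ hb) hm.aestronglyMeasurable 2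
  have heval : ∀ s, ∫ w, h (w s) ∂P = ∫ a, h a ∂ν := fun s ↦ by
    rw [← (measurePreserving_eval (fun _ : Fin T ↦ ν) s).map_eq,
      integral_map (measurable_pi_apply s).aemeasurable hm.aestronglyMeasurable]
  have hmean : ∫ w, S w ∂P = T * ∫ a, h a ∂ν := by
    simp_rw [hS]
    rw [integral_finsetSum _ fun s _ ↦ ?_]
    · simp [heval]
    · exact (hmL2.comp_measurePreserving (measurePreserving_eval _ s)).integrable one_le_two
  have hvar : Var[S; P] ≤ T * (1 / 4) := by
    rw [hSdef, variance_sum_pi fun _ ↦ hmL2, Finset.sum_const, Finset.card_univ,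
      Fintype.card_fin, nsmul_eq_mul]
    gcongr
    exact (variance_le_sq_of_bounded (ae_of_all _ hb) hm.aemeasurable).trans_eq (by norm_num)
  have hSm : AEMeasurable S P := by rw [hSdef]; fun_prop
  have hT' : (T : ℝ) ≠ 0 := Nat.cast_ne_zero.2 hT.ne'
  calc ∫ w, (empiricalMean h w - ∫ a, h a ∂ν) ^ 2 ∂P
      = (T : ℝ)⁻¹ ^ 2 * Var[S; P] := by
        rw [variance_eq_integral hSm, ← integral_const_mul, hmean]
        congr 1 with w
        rw [empiricalMean, ← hS]
        field_simp
    _ ≤ (T : ℝ)⁻¹ ^ 2 * (T * (1 / 4)) := by gcongr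
    _ = (4 * T : ℝ)⁻¹ := by field_simp

variable {X : Type*} [MeasurableSpace X]

/-- Maurey's empirical method: integrate the previous bound over `x` (Fubini) and pick a sample
that does no worse than the average. -/
lemma exists_integral_sq_empiricalMean_sub_le (M : Measure X) [IsFiniteMeasure M]
    {h : X → α → ℝ} (hm : Measurable (Function.uncurry h))
    (hb : ∀ x a, h x a ∈ Set.Icc (0 : ℝ) 1) {T : ℕ} (hT : 0 < T) :
    ∃ w : Fin T → α,
      ∫ x, (empiricalMean (h x) w - ∫ a, h x a ∂ν) ^ 2 ∂M ≤ M.real Set.univ * (4 * T : ℝ)⁻¹ := by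
  set P := Measure.pi fun _ : Fin T ↦ ν
  set F : (Fin T → α) → X → ℝ := fun w x ↦ (empiricalMean (h x) w - ∫ a, h x a ∂ν) ^ 2
  have hmean : Measurable fun x ↦ ∫ a, h x a ∂ν :=
    hm.stronglyMeasurable.integral_prod_right.measurable
  have hFm : Measurable (Function.uncurry F) := by
    refine Measurable.pow_const (Measurable.sub ?_ (hmean.comp measurable_snd)) 2
    exact measurable_const.mul <| Finset.measurable_sum _ fun s _ ↦
      hm.comp (measurable_snd.prodMk ((measurable_pi_apply s).comp measurable_fst))
  have hFb : ∀ w x, |F w x| ≤ 1 := fun w x ↦ by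
    have hemp := empiricalMean_mem_Icc (hb x) w
    have h₁ : ∫ a, h x a ∂ν ≤ 1 := (integral_mono_of_nonneg (ae_of_all _ fun a ↦ (hb x a).1)
      (integrable_const 1) (ae_of_all _ fun a ↦ (hb x a).2)).trans_eq (by simp)
    rw [abs_of_nonneg (sq_nonneg _), sq_le_one_iff_abs_le_one]
    exact abs_sub_le_of_nonneg_of_le hemp.1 hemp.2 (integral_nonneg fun a ↦ (hb x a).1) h₁
  have hFint : Integrable (Function.uncurry F) (P.prod M) :=
    .of_bound hFm.aestronglyMeasurable 1 <| ae_of_all _ fun p ↦ hFb p.1 p.2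
  obtain ⟨w, hw⟩ := exists_le_integral hFint.integral_prod_left
  refine ⟨w, hw.trans ?_⟩
  calc ∫ w, ∫ x, F w x ∂M ∂P = ∫ x, ∫ w, F w x ∂P ∂M := integral_integral_swap hFint
    _ ≤ ∫ _x, (4 * T : ℝ)⁻¹ ∂M :=
        integral_mono hFint.integral_prod_right (integrable_const _) fun x ↦
          integral_sq_empiricalMean_sub_le ν (hm.comp measurable_prodMk_left) (hb x) hT
    _ = M.real Set.univ * (4 * T : ℝ)⁻¹ := by simp

end Sampling

/-- From `|f| ≤ ε / 2 + f ^ 2 / (2 ε)`. -/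
lemma integral_abs_le_of_integral_sq_le {X : Type*} [MeasurableSpace X] {M : Measure X}
    [IsFiniteMeasure M] (hM : M.real Set.univ ≤ 1) {f : X → ℝ} (hf : MemLp f 2 M) {ε : ℝ}
    (hε : 0 < ε) (h : ∫ x, f x ^ 2 ∂M ≤ ε ^ 2) : ∫ x, |f x| ∂M ≤ ε := by
  have hpt : ∀ x, |f x| ≤ ε / 2 + (2 * ε)⁻¹ * f x ^ 2 := fun x ↦ by
    rw [← sq_abs (f x)]
    field_simp
    nlinarith [sq_nonneg (|f x| - ε)]
  calc ∫ x, |f x| ∂M ≤ ∫ x, (ε / 2 + (2 * ε)⁻¹ * f x ^ 2) ∂M :=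
        integral_mono (hf.integrable one_le_two).abs
          ((integrable_const _).add (hf.integrable_sq.const_mul _)) hpt
    _ = M.real Set.univ * (ε / 2) + (2 * ε)⁻¹ * ∫ x, f x ^ 2 ∂M := by
        rw [integral_add (integrable_const _) (hf.integrable_sq.const_mul _), integral_const_mul]
        simp
    _ ≤ 1 * (ε / 2) + (2 * ε)⁻¹ * ε ^ 2 := by gcongr
    _ = ε := by field_simp; ring

section EmpiricalMeasure

variable {E : Type*} [MeasurableSpace E] {T : ℕ}

def empiricalMeasure (c : Fin T → E) : Measure E := (T : ℝ≥0∞)⁻¹ • ∑ s, Measure.dirac (c s)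

lemma isProbabilityMeasure_empiricalMeasure (hT : 0 < T) (c : Fin T → E) :
    IsProbabilityMeasure (empiricalMeasure c) := by
  constructor
  simp [empiricalMeasure, ENNReal.inv_mul_cancel (Nat.cast_ne_zero.2 hT.ne')]

lemma integral_empiricalMeasure [MeasurableSingletonClass E] (c : Fin T → E) (f : E → ℝ) :
    ∫ y, f y ∂(empiricalMeasure c) = empiricalMean f c := by
  rw [empiricalMeasure, integral_smul_measure,
    integral_finsetSum_measure fun s _ ↦ integrable_dirac (by simp)]
  simp [empiricalMean]

end EmpiricalMeasure

lemma exists_choiceProb_empiricalMeasure_approx (j : Fin J)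
    (𝒳 : Set (Fin J → EuclideanSpace ℝ (Fin d))) (M : Measure (Fin J → EuclideanSpace ℝ (Fin d)))
    [IsProbabilityMeasure M] {δ : ℝ} (hδ : 0 < δ) {T : ℕ} (hT : (δ ^ 2)⁻¹ ≤ T)
    {α : Type*} [MeasurableSpace α] {c : α → EuclideanSpace ℝ (Fin d)} (hc : Measurable c)
    (ν : Measure α) [IsProbabilityMeasure ν] :
    ∃ w : Fin T → α, ∫ x in 𝒳,
      |choiceProb j x (empiricalMeasure (c ∘ w)) - choiceProb j x (ν.map c)| ∂M ≤ δ / 2 := by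
  have hT₀ : 0 < T := Nat.cast_pos.1 ((by positivity : (0 : ℝ) < (δ ^ 2)⁻¹).trans_le hT)
  have := Measure.isProbabilityMeasure_map (μ := ν) hc.aemeasurable
  have hh : Measurable (Function.uncurry fun x a ↦ mlogit j x (c a)) := by
    have := (continuous_mlogit (d := d) j).measurable.comp
      (measurable_fst.prodMk (hc.comp measurable_snd) :
        Measurable fun p : (Fin J → EuclideanSpace ℝ (Fin d)) × α ↦ (p.1, c p.2))
    exact this
  obtain ⟨w, hw⟩ := exists_integral_sq_empiricalMean_sub_le ν (M.restrict 𝒳) hh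
    (fun x a ↦ ⟨mlogit_nonneg j x _, mlogit_le_one j x _⟩) hT₀
  have hemp : ∀ x, empiricalMean (fun a ↦ mlogit j x (c a)) w =
      choiceProb j x (empiricalMeasure (c ∘ w)) :=
    fun x ↦ (integral_empiricalMeasure (c ∘ w) (mlogit j x)).symm
  simp only [hemp, ← choiceProb_map j _ hc, measureReal_restrict_apply_univ] at hw
  have := isProbabilityMeasure_empiricalMeasure hT₀ (c ∘ w)
  refine ⟨w, integral_abs_le_of_integral_sq_le
    (by rw [measureReal_restrict_apply_univ]; exact measureReal_le_one)
    (memLp_of_bounded (a := -1) (b := 1)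
      (ae_of_all _ fun x ↦ abs_le.1 (abs_choiceProb_sub_le_one j x _ _))
      ((integrable_choiceProb j _ _).sub (integrable_choiceProb j _ _)).1 2)
    (by positivity) (hw.trans ?_)⟩
  calc M.real 𝒳 * (4 * T : ℝ)⁻¹ ≤ 1 * (4 * (δ ^ 2)⁻¹)⁻¹ := by gcongr; exact measureReal_le_one
    _ = (δ / 2) ^ 2 := by field_simp; ring

lemma abs_choiceProb_sub_choiceProb_roundToGrid_le (j : Fin J)
    {x : Fin J → EuclideanSpace ℝ (Fin d)} {R : ℝ} (hR₀ : 0 ≤ R) (hx : ∀ l, ‖x l‖ ≤ R)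
    {η a : ℝ} {n : ℕ} (hη : 0 < η) (ha : a ≤ n * η)
    (G : Measure (EuclideanSpace ℝ (Fin d))) [IsProbabilityMeasure G] :
    |choiceProb j x G - choiceProb j x ((G.map (roundToGrid n η)).map (gridPoint η))| ≤
      exp (R * (√d * η)) - 1 + G.real {β | ‖β‖ ≤ a}ᶜ := by
  rw [Measure.map_map (measurable_of_countable _) (measurable_roundToGrid η),
    show R * (√d * η) = 2 * (R * (√d * (η / 2))) by ring]
  refine abs_choiceProb_sub_choiceProb_map_le j x hx (by positivity)
    ((measurable_of_countable _).comp (measurable_roundToGrid η))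
    (isClosed_le continuous_norm continuous_const).measurableSet (fun β hβ ↦ ?_) G
  rw [norm_sub_rev]
  exact mul_le_mul_of_nonneg_left
    (norm_gridPoint_roundToGrid_sub_le hη ((Set.mem_ofPred.1 hβ).trans ha)) hR₀

lemma exists_empiricalMeasure_gridPoint_approx (j : Fin J)
    {𝒳 : Set (Fin J → EuclideanSpace ℝ (Fin d))} (h𝒳 : MeasurableSet 𝒳)
    (M : Measure (Fin J → EuclideanSpace ℝ (Fin d))) [IsProbabilityMeasure M]
    {R : ℝ} (hR₀ : 0 ≤ R) (hR : ∀ x ∈ 𝒳, ∀ l, ‖x l‖ ≤ R)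
    {δ η a : ℝ} {n T : ℕ} (hδ : 0 < δ) (hη : 0 < η) (hηR : exp (R * (√d * η)) - 1 ≤ δ / 2)
    (ha : a ≤ n * η) (hT : (δ ^ 2)⁻¹ ≤ T)
    (G : Measure (EuclideanSpace ℝ (Fin d))) [IsProbabilityMeasure G]
    (hG : ENNReal.ofReal (1 - δ) ≤ G {β | ‖β‖ ≤ a}) :
    ∃ w : Fin T → Grid d n, ∫ x in 𝒳, |choiceProb j x G -
      choiceProb j x (empiricalMeasure (gridPoint η ∘ w))| ∂M ≤ 2 * δ := by
  have hgrid := measurable_of_countable (gridPoint (d := d) (n := n) η)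
  have := Measure.isProbabilityMeasure_map (μ := G) (measurable_roundToGrid (n := n) η).aemeasurable
  have := Measure.isProbabilityMeasure_map (μ := G.map (roundToGrid n η)) hgrid.aemeasurable
  set G' := (G.map (roundToGrid n η)).map (gridPoint η)
  have hout : G.real {β | ‖β‖ ≤ a}ᶜ ≤ δ := by
    have := (ENNReal.ofReal_le_iff_le_toReal (measure_ne_top _ _)).1 hG
    rw [probReal_compl_eq_one_sub (isClosed_le continuous_norm continuous_const).measurableSet]
    simp only [Measure.real]
    linarith
  have hround : ∀ x ∈ 𝒳, |choiceProb j x G - choiceProb j x G'| ≤ δ / 2 + δ := fun x hx ↦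
    (abs_choiceProb_sub_choiceProb_roundToGrid_le j hR₀ (hR x hx) hη ha G).trans
      (add_le_add hηR hout)
  obtain ⟨w, hw⟩ := exists_choiceProb_empiricalMeasure_approx j 𝒳 M hδ hT hgrid
    (G.map (roundToGrid n η))
  refine ⟨w, ?_⟩
  set Gw := empiricalMeasure (gridPoint η ∘ w)
  have : IsProbabilityMeasure Gw := isProbabilityMeasure_empiricalMeasure
    (Nat.cast_pos.1 ((by positivity : (0 : ℝ) < (δ ^ 2)⁻¹).trans_le hT)) _
  have hint : ∀ (G₁ G₂ : Measure (EuclideanSpace ℝ (Fin d))) [IsProbabilityMeasure G₁]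
      [IsProbabilityMeasure G₂],
      IntegrableOn (fun x ↦ |choiceProb j x G₁ - choiceProb j x G₂|) 𝒳 M :=
    fun G₁ G₂ _ _ ↦ ((integrable_choiceProb j _ G₁).sub (integrable_choiceProb j _ G₂)).abs
  calc ∫ x in 𝒳, |choiceProb j x G - choiceProb j x Gw| ∂M
      ≤ ∫ x in 𝒳, ((δ / 2 + δ) + |choiceProb j x Gw - choiceProb j x G'|) ∂M := by
        refine setIntegral_mono_on (hint _ _) ((integrable_const _).add (hint _ _)) h𝒳
          fun x hx ↦ ?_
        rw [abs_sub_comm _ (choiceProb j x G')]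
        linarith [abs_sub_le (choiceProb j x G) (choiceProb j x G') (choiceProb j x Gw),
          hround x hx]
    _ = (δ / 2 + δ) * M.real 𝒳 + ∫ x in 𝒳, |choiceProb j x Gw - choiceProb j x G'| ∂M := by
        rw [integral_add (integrable_const _) (hint _ _), setIntegral_const, smul_eq_mul, mul_comm]
    _ ≤ (δ / 2 + δ) * 1 + δ / 2 := by gcongr; exact measureReal_le_one
    _ = 2 * δ := by ring

lemma exists_pos_exp_mul_sub_one_le (c : ℝ) {ε : ℝ} (hε : 0 < ε) :
    ∃ η > 0, exp (c * η) - 1 ≤ ε := by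
  have hlim : Tendsto (fun η ↦ exp (c * η) - 1) (𝓝[>] 0) (𝓝 0) := by
    have : Continuous fun η ↦ exp (c * η) - 1 := by fun_prop
    simpa using (this.tendsto 0).mono_left nhdsWithin_le_nhds
  obtain ⟨η, hηε, hη⟩ := ((hlim.eventually (ge_mem_nhds hε)).and self_mem_nhdsWithin).exists
  exact ⟨η, hη, hηε⟩

lemma log_card_samples_le_mul_pow (T : ℕ) {η a : ℝ} (hη : 0 < η) (ha : 1 ≤ a) :
    log (Fintype.card (Fin T → Grid d ⌈a / η⌉₊)) ≤ d * T * (2 / η + 2) * a ^ d := by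
  refine (log_card_samples_le T).trans ?_
  rcases d.eq_zero_or_pos with rfl | hd
  · simp
  have hn : (⌈a / η⌉₊ : ℝ) ≤ a / η + a :=
    (Nat.ceil_lt_add_one (by positivity)).le.trans (by linarith)
  calc (d * T * (2 * ⌈a / η⌉₊) : ℝ) ≤ d * T * (2 * (a / η + a)) := by gcongr
    _ = d * T * ((2 / η + 2) * a) := by ring
    _ ≤ d * T * ((2 / η + 2) * a ^ d) := by gcongr; exact le_self_pow₀ ha hd.ne'
    _ = d * T * (2 / η + 2) * a ^ d := by ring

theorem entropy_bound_almost_compact_support_general {d J : ℕ}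
    (𝒳 : Set (Fin J → EuclideanSpace ℝ (Fin d))) (h𝒳 : IsCompact 𝒳)
    (M : Measure (Fin J → EuclideanSpace ℝ (Fin d))) [IsProbabilityMeasure M]
    (j : Fin J) (δ : ℝ) (hδ : δ ∈ Set.Ioo (0 : ℝ) 1) :
    ∃ Kδ : ℝ, ∀ a : ℝ, 1 ≤ a →
      ∃ (m : ℕ) (Gs : Fin m → ProbabilityMeasure (EuclideanSpace ℝ (Fin d))),
        Real.log m ≤ Kδ * a ^ d ∧
          ∀ G : ProbabilityMeasure (EuclideanSpace ℝ (Fin d)),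
            ENNReal.ofReal (1 - δ) ≤
              (G : Measure (EuclideanSpace ℝ (Fin d))) {β | ‖β‖ ≤ a} →
              ∃ i : Fin m,
                ∫ x in 𝒳, |choiceProb j x G - choiceProb j x (Gs i)| ∂M < 3 * δ := by
  obtain ⟨R, hR₀, hR⟩ := h𝒳.isBounded.exists_pos_norm_le
  obtain ⟨η, hη, hηR⟩ := exists_pos_exp_mul_sub_one_le (R * √d) (half_pos hδ.1)
  set T := ⌈(δ ^ 2)⁻¹⌉₊
  have hT₀ : 0 < T := Nat.ceil_pos.2 (by have := hδ.1; positivity)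
  refine ⟨d * T * (2 / η + 2), fun a ha ↦ ?_⟩
  set n := ⌈a / η⌉₊
  let e := Fintype.equivFin (Fin T → Grid d n)
  refine ⟨_, fun i ↦ ⟨empiricalMeasure (gridPoint η ∘ e.symm i),
    isProbabilityMeasure_empiricalMeasure hT₀ _⟩, log_card_samples_le_mul_pow T hη ha,
    fun G hG ↦ ?_⟩
  obtain ⟨w, hw⟩ := exists_empiricalMeasure_gridPoint_approx j h𝒳.measurableSet M hR₀.le
    (fun x hx l ↦ (norm_le_pi_norm x l).trans (hR x hx)) hδ.1 hη (by rwa [← mul_assoc])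
    ((div_le_iff₀ hη).1 (Nat.le_ceil _)) (Nat.le_ceil _) (G : Measure _) hG
  exact ⟨e w, by simpa using hw.trans_lt (by linarith [hδ.1])⟩

/-- metric entropy bound for mixing distributions putting mass at least
`1 − δ` on the ball of radius `a`: there is a constant `K_δ` such that for every `a ≥ 1`
the class admits a `3δ`-net of cardinality `m` with `log m ≤ K_δ aᵈ`. -/
theorem entropy_bound_almost_compact_support {d J : ℕ} (hJ : 2 ≤ J)
    (𝒳 : Set (Fin J → EuclideanSpace ℝ (Fin d))) (h𝒳 : IsCompact 𝒳)
    (M : Measure (Fin J → EuclideanSpace ℝ (Fin d))) [IsProbabilityMeasure M]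
    (hM : M 𝒳ᶜ = 0)
    (j : Fin J) (δ : ℝ) (hδ : δ ∈ Set.Ioo (0 : ℝ) 1) :
    ∃ Kδ : ℝ, ∀ a : ℝ, 1 ≤ a →
      ∃ (m : ℕ) (Gs : Fin m → ProbabilityMeasure (EuclideanSpace ℝ (Fin d))),
        Real.log m ≤ Kδ * a ^ d ∧
          ∀ G : ProbabilityMeasure (EuclideanSpace ℝ (Fin d)),
            ENNReal.ofReal (1 - δ) ≤
              (G : Measure (EuclideanSpace ℝ (Fin d))) {β | ‖β‖ ≤ a} →
              ∃ i : Fin m,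
                ∫ x in 𝒳, |choiceProb j x G - choiceProb j x (Gs i)| ∂M < 3 * δ :=
  entropy_bound_almost_compact_support_general 𝒳 h𝒳 M j δ hδ
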